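/- arXiv:2603.29008 — 2 statements merged into one kernel-verified Lean document; each statement's English description precedes it below -/
import Mathlib

section
/- Let Γ be a finite simple graph and u ∈ V(Γ) a vertex such that star(u) ≠ Γ. Then the right-angled Artin group A(Γ) splits non-trivially over a subgroup isomorphic to ⟨star(u)⟩, the subgroup of A(Γ) generated by the vertices of the star of u. Concretely, A(Γ) is isomorphic to the amalgamated free product of A(star(u)) and A(Γ) along the embeddings φ₁: ⟨star(u)⟩ → A(star(u)) sending u to u² and fixing each vertex of link(u), and φ₂: ⟨star(u)⟩ → A(Γ) the inclusion, and this splitting is non-trivial. -/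
/-! ## Right-angled Artin groups -/

/-- The commutator relations defining the right-angled Artin group of a graph. -/
def raagRels {V : Type*} (Γ : SimpleGraph V) : Set (FreeGroup V) :=
  {r | ∃ u v : V, Γ.Adj u v ∧
    r = FreeGroup.of u * FreeGroup.of v * (FreeGroup.of u)⁻¹ * (FreeGroup.of v)⁻¹}

/-- The right-angled Artin group of a simple graph. -/
abbrev RAAG {V : Type*} (Γ : SimpleGraph V) : Type _ := PresentedGroup (raagRels Γ)

/-- The canonical generator of `RAAG Γ` associated to a vertex. -/
abbrev RAAG.gen {V : Type*} (Γ : SimpleGraph V) (v : V) : RAAG Γ :=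
  PresentedGroup.of v

/-- The canonical generating set of a right-angled Artin group: its vertex generators. -/
def raagGens {V : Type*} (Γ : SimpleGraph V) : Set (RAAG Γ) :=
  Set.range (RAAG.gen Γ)

/-- The subgroup of `RAAG Γ` generated by (the generators corresponding to) a set of
vertices. -/
def vertexSubgroup {V : Type*} (Γ : SimpleGraph V) (Λ : Set V) : Subgroup (RAAG Γ) :=
  Subgroup.closure (RAAG.gen Γ '' Λ)

/-! ## Free abelian groups ℤ^n (written multiplicatively) -/

/-- The free abelian group `ℤ^n` of rank `n`, written multiplicatively. -/
abbrev FreeAb (n : ℕ) : Type := Multiplicative (Fin n → ℤ)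

/-! ## Word metric and coarse separation -/

section Coarse

variable {G : Type*} [Group G]

/-- `S` is a finite generating set of `G`. -/
def IsFinGenSet (S : Set G) : Prop := S.Finite ∧ Subgroup.closure S = ⊤

/-- One step in the Cayley graph of `(G, S)`: multiply on the right by a generator or
the inverse of a generator. -/
def WordStep (S : Set G) (x y : G) : Prop := ∃ s : G, (s ∈ S ∨ s⁻¹ ∈ S) ∧ y = x * s

/-- The word distance between two elements of `G`, with respect to the (symmetrised)
generating set `S`, with value `⊤` if `y` is not reachable from `x`. -/
noncomputable def wordDist (S : Set G) (x y : G) : ℕ∞ :=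
  sInf {n : ℕ∞ | ∃ l : List G, (∀ s ∈ l, s ∈ S ∨ s⁻¹ ∈ S) ∧ y = x * l.prod ∧ n = l.length}

/-- The word distance from a subset `A ⊆ G` to a point. -/
noncomputable def setWordDist (S : Set G) (A : Set G) (x : G) : ℕ∞ :=
  ⨅ a ∈ A, wordDist S a x

/-- The (closed) `L`-neighbourhood of a subset `A ⊆ G` in the word metric of `S`. -/
def wordNbhd (S : Set G) (A : Set G) (L : ℕ) : Set G :=
  {x | setWordDist S A x ≤ (L : ℕ∞)}

/-- Two points are connected within the subset `K` of the Cayley graph of `(G, S)` if they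
are joined by a path of the Cayley graph staying in `K`. -/
def ConnectedInCayley (S : Set G) (K : Set G) (x y : G) : Prop :=
  Relation.ReflTransGen (fun a b => a ∈ K ∧ b ∈ K ∧ WordStep S a b) x y

/-- The connected component of `x` in `K ⊆ G` (for the Cayley graph of `(G,S)`) is *deep*
with respect to `A`: it contains points arbitrarily far away from `A`. -/
def DeepComponent (S : Set G) (A : Set G) (K : Set G) (x : G) : Prop :=
  ∀ D : ℕ, ∃ y : G, ConnectedInCayley S K x y ∧ (D : ℕ∞) < setWordDist S A y

/-- A subset `A ⊆ G` *coarsely separates* `G` (with respect to the word metric associated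
to `S`): the complement of some neighbourhood of `A` has at least two deep connected
components. -/
def CoarselySeparates (S : Set G) (A : Set G) : Prop :=
  ∃ L : ℕ, ∃ x y : G, x ∈ (wordNbhd S A L)ᶜ ∧ y ∈ (wordNbhd S A L)ᶜ ∧
    ¬ ConnectedInCayley S (wordNbhd S A L)ᶜ x y ∧
    DeepComponent S A (wordNbhd S A L)ᶜ x ∧ DeepComponent S A (wordNbhd S A L)ᶜ y

end Coarse

/-! ## Splittings of groups -/

/-- The amalgamated free product of two groups along two injections of a common
subgroup, built as a quotient of the free product `Monoid.Coprod`. -/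
def AmalgamatedProduct {A B C : Type*} [Group A] [Group B] [Group C]
    (φ₁ : C →* A) (φ₂ : C →* B) : Type _ :=
  (Monoid.Coprod A B) ⧸ Subgroup.normalClosure
    (Set.range fun c => Monoid.Coprod.inl (φ₁ c) * (Monoid.Coprod.inr (φ₂ c))⁻¹)

noncomputable instance {A B C : Type*} [Group A] [Group B] [Group C]
    (φ₁ : C →* A) (φ₂ : C →* B) : Group (AmalgamatedProduct φ₁ φ₂) := by
  unfold AmalgamatedProduct; infer_instance

/-- A non-trivial decomposition of `G` as an amalgamated free product `A *_C B`,
with edge group `C`. -/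
structure AmalgamSplitting (G : Type u) [Group G] (C : Type v) [Group C] where
  A : Type u
  B : Type u
  [grpA : Group A]
  [grpB : Group B]
  φ₁ : C →* A
  φ₂ : C →* B
  inj₁ : Function.Injective φ₁
  inj₂ : Function.Injective φ₂
  notSurj₁ : ¬ Function.Surjective φ₁
  notSurj₂ : ¬ Function.Surjective φ₂
  iso : G ≃* AmalgamatedProduct φ₁ φ₂

/-- A decomposition of `G` as an HNN extension with edge group (isomorphic to) `C`. -/
structure HNNSplitting (G : Type u) [Group G] (C : Type v) [Group C] where
  K : Type u
  [grpK : Group K]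
  A : Subgroup K
  B : Subgroup K
  φ : A ≃* B
  isoC : C ≃* A
  iso : G ≃* HNNExtension K A B φ

/-- `G` splits (non-trivially) over a subgroup isomorphic to `C`: it decomposes
non-trivially as an amalgamated free product or as an HNN extension with edge group `C`. -/
def SplitsOver (G : Type u) [Group G] (C : Type v) [Group C] : Prop :=
  Nonempty (AmalgamSplitting G C) ∨ Nonempty (HNNSplitting G C)

/-- `G` virtually splits over (a subgroup isomorphic to) `C`: some finite-index subgroup
of `G` splits over a subgroup isomorphic to `C`. -/
def VirtuallySplitsOver (G : Type u) [Group G] (C : Type v) [Group C] : Prop :=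
  ∃ H : Subgroup G, H.FiniteIndex ∧ SplitsOver H C

/-! ## Graph-theoretic conditions -/

section Graph

variable {V : Type*}

/-- Removing the vertex set `s` from `Γ` disconnects the graph: the induced subgraph on
the complement of `s` is not preconnected. -/
def SeparatesGraph (Γ : SimpleGraph V) (s : Set V) : Prop :=
  ¬ (Γ.induce {v : V | v ∉ s}).Preconnected

/-- `Γ` is a complete graph. -/
def IsCompleteGraph (Γ : SimpleGraph V) : Prop := ∀ u v : V, u ≠ v → Γ.Adj u v

/-- A *complete cut* of a graph: a complete subgraph (clique) whose removal disconnects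
the graph. -/
def CompleteCut (Γ : SimpleGraph V) (s : Set V) : Prop :=
  Γ.IsClique s ∧ SeparatesGraph Γ s

/-- Condition (iv) of the main theorem: `Γ` is a complete graph with `n+1` vertices, or
contains a complete subgraph of size `n` having a subgraph that separates `Γ`. -/
def CliqueCutCondition (Γ : SimpleGraph V) [Fintype V] (n : ℕ) : Prop :=
  (IsCompleteGraph Γ ∧ Fintype.card V = n + 1) ∨
  (∃ t : Finset V, Γ.IsNClique n t ∧ ∃ s : Set V, s ⊆ ↑t ∧ SeparatesGraph Γ s)

end Graph

/-! ## Links and stars -/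

section LinkStar

variable {V : Type*}

/-- The link of a set of vertices: all vertices adjacent to every vertex of `Λ`. -/
def linkSet (Γ : SimpleGraph V) (Λ : Set V) : Set V := {v | ∀ u ∈ Λ, Γ.Adj v u}

/-- The star of a set of vertices: `Λ` together with its link. -/
def starSet (Γ : SimpleGraph V) (Λ : Set V) : Set V := Λ ∪ linkSet Γ Λ

/-- The star of a vertex: the vertex together with its neighbours. -/
def starOfVertex (Γ : SimpleGraph V) (u : V) : Set V := {v | v = u ∨ Γ.Adj u v}

end LinkStar

/-! ## Coarse geometry of graphs -/

section CoarseGraph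

variable {W : Type*}

/-- The `L`-neighbourhood of a set of vertices in a graph, for the graph metric. -/
def graphNbhd (X : SimpleGraph W) (A : Set W) (L : ℕ) : Set W :=
  {x | ∃ a ∈ A, X.dist a x ≤ L}

/-- Two vertices are connected within `K`: joined by a path of `X` staying in `K`. -/
def ConnectedWithin (X : SimpleGraph W) (K : Set W) (x y : W) : Prop :=
  Relation.ReflTransGen (fun a b => a ∈ K ∧ b ∈ K ∧ X.Adj a b) x y

/-- `x` is at graph distance at least `D` from every point of `A`. -/
def FarFrom (X : SimpleGraph W) (A : Set W) (D : ℕ) (x : W) : Prop :=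
  ∀ a ∈ A, D ≤ X.dist a x

/-- A subset `Y` of a graph is coarsely connected: for some `r ≥ 0`, any two points of `Y`
are joined by an `r`-chain inside `Y`. -/
def CoarselyConnectedIn (X : SimpleGraph W) (Y : Set W) : Prop :=
  ∃ r : ℕ, ∀ x ∈ Y, ∀ y ∈ Y,
    Relation.ReflTransGen (fun a b => a ∈ Y ∧ b ∈ Y ∧ X.dist a b ≤ r) x y

/-- A subset `Y` of a graph `X` is coarsely separated by a family `Zs` of subsets:
for some `L ≥ 0` and every `D ≥ 0`, there is `Z ∈ Zs` such that `Y` minus the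
`L`-neighbourhood of `Z` has at least two connected components containing points at
distance at least `D` from `Z`. -/
def CoarselySeparatedByFamily (X : SimpleGraph W) (Y : Set W) (Zs : Set (Set W)) : Prop :=
  ∃ L : ℕ, ∀ D : ℕ, ∃ Z ∈ Zs, ∃ x ∈ Y \ graphNbhd X Z L, ∃ y ∈ Y \ graphNbhd X Z L,
    ¬ ConnectedWithin X (Y \ graphNbhd X Z L) x y ∧ FarFrom X Z D x ∧ FarFrom X Z D y

/-- `Z` coarsely separates `Y` from `W'` in the graph `X`: some neighbourhood of `Z`
separates all points of `Y` sufficiently far from `Z` from all points of `W'`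
sufficiently far from `Z`. -/
def CoarselySeparatesFrom (X : SimpleGraph W) (Z Y W' : Set W) : Prop :=
  ∃ L D₀ : ℕ, ∀ y ∈ Y, ∀ w ∈ W', FarFrom X Z D₀ y → FarFrom X Z D₀ w →
    ¬ ConnectedWithin X (graphNbhd X Z L)ᶜ y w

/-!
Since `u` commutes with every generator of `A(star(u))`, each element there is `u ^ k * y`
with `k` the exponent sum of `u` and `y` the image under the endomorphism killing `u`;
doubling `u` doubles `k` and fixes `y`, so it is injective, and it misses `u` because `k`
doubles. The inclusion `A(star(u)) → A(Γ)` has the retraction killing the other vertices,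
and misses any vertex outside the star. Finally, `A(Γ)` and the amalgamated product have
mutually inverse presentations: `u ↦ u` in the left factor, `v ↦ v` in the right factor,
and back by the inclusion on the left factor and by `u ↦ u ^ 2` on the right one. The only
relations to check involve `u` and a vertex `v` of its link, and `v` already lies in the
left factor.
-/

namespace RAAG

variable {V : Type*} {Γ : SimpleGraph V} {G : Type*} [Group G]

theorem gen_commute {a b : V} (h : Γ.Adj a b) : Commute (gen Γ a) (gen Γ b) := by
  have hrel := PresentedGroup.one_of_mem (rels := raagRels Γ) ⟨a, b, h, rfl⟩
  simp only [map_mul, map_inv] at hrel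
  exact commutatorElement_eq_one_iff_commute.mp hrel

theorem lift_eq_one_of_mem_rels {f : V → G} (hf : ∀ a b, Γ.Adj a b → Commute (f a) (f b)) :
    ∀ r ∈ raagRels Γ, FreeGroup.lift f r = 1 := by
  rintro r ⟨a, b, hab, rfl⟩
  simp only [map_mul, map_inv, FreeGroup.lift_apply_of, (hf a b hab).eq]
  group

def lift (f : V → G) (hf : ∀ a b, Γ.Adj a b → Commute (f a) (f b)) : RAAG Γ →* G :=
  PresentedGroup.toGroup (lift_eq_one_of_mem_rels hf)

@[simp]
theorem lift_gen {f : V → G} (hf : ∀ a b, Γ.Adj a b → Commute (f a) (f b)) (v : V) :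
    lift f hf (gen Γ v) = f v :=
  PresentedGroup.toGroup.of _

theorem hom_ext {f g : RAAG Γ →* G} (h : ∀ v, f (gen Γ v) = g (gen Γ v)) : f = g :=
  PresentedGroup.ext h

theorem commute_gen_of_forall_adj {u : V} (hu : ∀ v, v ≠ u → Γ.Adj u v) (x : RAAG Γ) :
    Commute (gen Γ u) x := by
  have hgen : Subgroup.closure (Set.range (gen Γ)) ≤ Subgroup.centralizer {gen Γ u} := by
    rw [Subgroup.closure_le]
    rintro _ ⟨v, rfl⟩
    rw [SetLike.mem_coe, Subgroup.mem_centralizer_singleton_iff]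
    obtain rfl | hv := eq_or_ne v u
    · rfl
    · exact (gen_commute (hu v hv)).eq.symm
  rw [PresentedGroup.closure_range_of] at hgen
  exact (Subgroup.mem_centralizer_singleton_iff.mp (hgen trivial)).symm

section ExpSum

variable [DecidableEq V]

def expSum (w : V) : RAAG Γ →* Multiplicative ℤ :=
  lift (fun v => Multiplicative.ofAdd (if v = w then 1 else 0)) fun _ _ _ => Commute.all _ _

theorem expSum_gen (w v : V) :
    expSum w (gen Γ v) = Multiplicative.ofAdd (if v = w then 1 else 0) :=
  lift_gen _ _

def powGen (u : V) (n : ℕ) : RAAG Γ →* RAAG Γ :=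
  lift (fun v => gen Γ v ^ if v = u then n else 1) fun _ _ h => (gen_commute h).pow_pow _ _

variable {u : V} {n : ℕ}

@[simp]
theorem powGen_gen_self (u : V) (n : ℕ) : powGen u n (gen Γ u) = gen Γ u ^ n := by
  simp [powGen]

theorem powGen_gen_of_ne {v : V} (h : v ≠ u) : powGen u n (gen Γ v) = gen Γ v := by
  simp [powGen, h]

theorem powGen_comp_powGen (m n : ℕ) :
    (powGen u m).comp (powGen u n) = powGen (Γ := Γ) u (m * n) := by
  refine hom_ext fun v => ?_
  obtain rfl | hv := eq_or_ne v u
  · simp [← pow_mul]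
  · simp [powGen_gen_of_ne hv]

theorem expSum_powGen (x : RAAG Γ) : expSum u (powGen u n x) = expSum u x ^ n := by
  suffices h : (expSum u).comp (powGen u n) = (powMonoidHom n).comp (expSum (Γ := Γ) u) from
    DFunLike.congr_fun h x
  refine hom_ext fun v => ?_
  obtain rfl | hv := eq_or_ne v u
  · simp [expSum_gen]
  · simp [expSum_gen, powGen_gen_of_ne hv, hv]

theorem powGen_not_surjective (hn : n ≠ 1) : ¬ Function.Surjective (powGen (Γ := Γ) u n) := by
  rintro hsurj
  obtain ⟨x, hx⟩ := hsurj (gen Γ u)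
  have hexp := congrArg (fun y => (expSum u y).toAdd) hx
  simp only [expSum_powGen, toAdd_pow, expSum_gen, if_pos, toAdd_ofAdd] at hexp
  exact hn (by exact_mod_cast Int.eq_one_of_mul_eq_one_right (Int.natCast_nonneg n) hexp)

theorem eq_gen_zpow_expSum_mul_powGen_zero (hu : ∀ v, v ≠ u → Γ.Adj u v) (x : RAAG Γ) :
    gen Γ u ^ (expSum u x).toAdd * powGen u 0 x = x := by
  let factor : RAAG Γ →* RAAG Γ :=
    ((zpowersHom _ (gen Γ u)).comp (expSum u)).noncommCoprod (powGen u 0)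
      (fun _ y => by simpa using (commute_gen_of_forall_adj hu (powGen u 0 y)).zpow_left _) |>.comp
      ((MonoidHom.id _).prod (MonoidHom.id _))
  suffices h : factor = MonoidHom.id _ from DFunLike.congr_fun h x
  refine hom_ext fun v => ?_
  obtain rfl | hv := eq_or_ne v u
  · simp [factor, MonoidHom.noncommCoprod_apply, expSum_gen]
  · simp [factor, MonoidHom.noncommCoprod_apply, expSum_gen, powGen_gen_of_ne hv, hv]

theorem powGen_injective (hu : ∀ v, v ≠ u → Γ.Adj u v) (hn : n ≠ 0) :
    Function.Injective (powGen (Γ := Γ) u n) := by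
  refine (injective_iff_map_eq_one _).mpr fun x hx => ?_
  have hexp : expSum u x = 1 := by
    have h := congrArg (expSum u) hx
    rw [expSum_powGen, map_one, pow_eq_one_iff] at h
    exact h.resolve_right hn
  have hkill : powGen u 0 x = 1 := by
    rw [← zero_mul n, ← powGen_comp_powGen, MonoidHom.comp_apply, hx, map_one]
  rw [← eq_gen_zpow_expSum_mul_powGen_zero hu x, hexp, hkill, toAdd_one, zpow_zero, one_mul]

end ExpSum

section Inclusion

variable (S : Set V)

def inclusion : RAAG (Γ.induce S) →* RAAG Γ :=
  lift (fun s => gen Γ s) fun _ _ h => gen_commute h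

@[simp]
theorem inclusion_gen (s : S) : inclusion S (gen (Γ.induce S) s) = gen Γ s :=
  lift_gen _ _

open scoped Classical in
noncomputable def restrict : RAAG Γ →* RAAG (Γ.induce S) :=
  lift (fun v => if h : v ∈ S then gen (Γ.induce S) ⟨v, h⟩ else 1) fun a b hab => by
    by_cases ha : a ∈ S <;> by_cases hb : b ∈ S <;> simp only [ha, hb, dite_true, dite_false]
    · exact gen_commute (Γ := Γ.induce S) (a := ⟨a, ha⟩) (b := ⟨b, hb⟩) hab
    all_goals simp

theorem restrict_comp_inclusion : (restrict S).comp (inclusion (Γ := Γ) S) = MonoidHom.id _ :=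
  hom_ext fun s => by simp [restrict]

theorem inclusion_injective : Function.Injective (inclusion (Γ := Γ) S) :=
  Function.LeftInverse.injective (g := restrict S) (DFunLike.congr_fun (restrict_comp_inclusion S))

theorem inclusion_not_surjective [DecidableEq V] (hS : S ≠ Set.univ) :
    ¬ Function.Surjective (inclusion (Γ := Γ) S) := by
  obtain ⟨w, hw⟩ := (Set.ne_univ_iff_exists_notMem S).mp hS
  have hzero : (expSum w).comp (inclusion (Γ := Γ) S) = 1 :=
    hom_ext fun s => by simp [expSum_gen, show (s : V) ≠ w from fun h => hw (h ▸ s.2)]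
  rintro hsurj
  obtain ⟨x, hx⟩ := hsurj (gen Γ w)
  have hexp := DFunLike.congr_fun hzero x
  simp [hx, expSum_gen] at hexp

theorem range_inclusion : (inclusion (Γ := Γ) S).range = vertexSubgroup Γ S := by
  rw [MonoidHom.range_eq_map, ← PresentedGroup.closure_range_of, MonoidHom.map_closure,
    ← Set.range_comp, vertexSubgroup, Set.image_eq_range]
  rfl

noncomputable def equivVertexSubgroup : RAAG (Γ.induce S) ≃* vertexSubgroup Γ S :=
  (MonoidHom.ofInjective (inclusion_injective S)).trans
    (MulEquiv.subgroupCongr (range_inclusion S))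

theorem inclusion_comp_powGen [DecidableEq V] {u : V} (hu : u ∈ S) (n : ℕ) :
    (inclusion S).comp (powGen ⟨u, hu⟩ n) = (powGen u n).comp (inclusion (Γ := Γ) S) :=
  hom_ext fun s => by
    by_cases h : (s : V) = u
    · obtain rfl : s = ⟨u, hu⟩ := Subtype.ext h
      simp
    · have h' : s ≠ ⟨u, hu⟩ := fun hs => h (congrArg Subtype.val hs)
      simp [powGen_gen_of_ne h, powGen_gen_of_ne h']

end Inclusion

end RAAG

namespace AmalgamatedProduct

variable {A B C G : Type*} [Group A] [Group B] [Group C] [Group G] {φ₁ : C →* A} {φ₂ : C →* B}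

noncomputable def mk : Monoid.Coprod A B →* AmalgamatedProduct φ₁ φ₂ := QuotientGroup.mk' _

noncomputable def inl : A →* AmalgamatedProduct φ₁ φ₂ := mk.comp Monoid.Coprod.inl

noncomputable def inr : B →* AmalgamatedProduct φ₁ φ₂ := mk.comp Monoid.Coprod.inr

theorem inl_apply_eq_inr_apply (c : C) :
    (inl (φ₁ c) : AmalgamatedProduct φ₁ φ₂) = inr (φ₂ c) := by
  have hrel : (mk (Monoid.Coprod.inl (φ₁ c) * (Monoid.Coprod.inr (φ₂ c))⁻¹) :
      AmalgamatedProduct φ₁ φ₂) = 1 :=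
    (QuotientGroup.eq_one_iff _).mpr (Subgroup.subset_normalClosure ⟨c, rfl⟩)
  rwa [map_mul, map_inv, mul_inv_eq_one] at hrel

noncomputable def lift (f : A →* G) (g : B →* G) (h : f.comp φ₁ = g.comp φ₂) :
    AmalgamatedProduct φ₁ φ₂ →* G :=
  QuotientGroup.lift _ (Monoid.Coprod.lift f g) <| Subgroup.normalClosure_le_normal <| by
    rintro _ ⟨c, rfl⟩
    rw [SetLike.mem_coe, MonoidHom.mem_ker, map_mul, map_inv, Monoid.Coprod.lift_apply_inl,
      Monoid.Coprod.lift_apply_inr, mul_inv_eq_one]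
    exact DFunLike.congr_fun h c

variable {f : A →* G} {g : B →* G} {h : f.comp φ₁ = g.comp φ₂}

@[simp]
theorem lift_inl (a : A) : lift f g h (inl a) = f a := rfl

@[simp]
theorem lift_inr (b : B) : lift f g h (inr b) = g b := rfl

theorem hom_ext {f g : AmalgamatedProduct φ₁ φ₂ →* G} (h₁ : f.comp inl = g.comp inl)
    (h₂ : f.comp inr = g.comp inr) : f = g :=
  QuotientGroup.monoidHom_ext _ (Monoid.Coprod.hom_ext h₁ h₂)

end AmalgamatedProduct

section Star

open RAAG AmalgamatedProduct

variable {V : Type*} (Γ : SimpleGraph V) (u : V)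

abbrev starCenter : starOfVertex Γ u := ⟨u, Or.inl rfl⟩

theorem starCenter_adj {v : starOfVertex Γ u} (hv : v ≠ starCenter Γ u) :
    (Γ.induce (starOfVertex Γ u)).Adj (starCenter Γ u) v :=
  v.2.resolve_left fun h => hv (Subtype.ext h)

variable [DecidableEq V] (n : ℕ)

local notation "P" =>
  AmalgamatedProduct (powGen (starCenter Γ u) n) (inclusion (Γ := Γ) (starOfVertex Γ u))

theorem inr_gen_eq_inl_gen {v : V} (hv : Γ.Adj u v) :
    (inr (gen Γ v) : P) = inl (gen _ ⟨v, Or.inr hv⟩) := by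
  rw [← inclusion_gen (Γ := Γ) (starOfVertex Γ u) ⟨v, Or.inr hv⟩, ← inl_apply_eq_inr_apply,
    powGen_gen_of_ne fun h => hv.ne (congrArg Subtype.val h).symm]

noncomputable def toStarAmalgam : RAAG Γ →* P :=
  RAAG.lift (fun v => if v = u then inl (gen _ (starCenter Γ u)) else inr (gen Γ v)) <| by
    have hcomm : ∀ v, Γ.Adj u v → Commute (inl (gen _ (starCenter Γ u)) : P) (inr (gen Γ v)) :=
      fun v hv => by
        rw [inr_gen_eq_inl_gen Γ u n hv]
        exact (gen_commute (Γ := Γ.induce _) (a := starCenter Γ u) (b := ⟨v, Or.inr hv⟩) hv).map _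
    intro a b hab
    by_cases ha : a = u <;> by_cases hb : b = u <;> simp only [ha, hb, if_true, if_false]
    · exact absurd (ha.trans hb.symm) hab.ne
    · exact hcomm b (ha ▸ hab)
    · exact (hcomm a (hb ▸ hab.symm)).symm
    · exact (gen_commute hab).map _

@[simp]
theorem toStarAmalgam_gen_self :
    toStarAmalgam Γ u n (gen Γ u) = inl (gen _ (starCenter Γ u)) := by
  simp [toStarAmalgam]

theorem toStarAmalgam_gen_of_ne {v : V} (hv : v ≠ u) :
    toStarAmalgam Γ u n (gen Γ v) = inr (gen Γ v) := by
  simp [toStarAmalgam, hv]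

noncomputable def ofStarAmalgam : P →* RAAG Γ :=
  AmalgamatedProduct.lift (inclusion _) (powGen u n)
    (inclusion_comp_powGen (starOfVertex Γ u) (Or.inl rfl) n)

@[simp]
theorem ofStarAmalgam_inl (x : RAAG (Γ.induce (starOfVertex Γ u))) :
    ofStarAmalgam Γ u n (inl x) = inclusion _ x :=
  rfl

@[simp]
theorem ofStarAmalgam_inr (x : RAAG Γ) : ofStarAmalgam Γ u n (inr x) = powGen u n x :=
  rfl

theorem ofStarAmalgam_comp_toStarAmalgam :
    (ofStarAmalgam Γ u n).comp (toStarAmalgam Γ u n) = MonoidHom.id _ := by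
  refine RAAG.hom_ext fun v => ?_
  obtain rfl | hv := eq_or_ne v u
  · simp
  · simp [toStarAmalgam_gen_of_ne Γ u n hv, powGen_gen_of_ne hv]

theorem toStarAmalgam_comp_ofStarAmalgam :
    (toStarAmalgam Γ u n).comp (ofStarAmalgam Γ u n) = MonoidHom.id _ := by
  refine AmalgamatedProduct.hom_ext (RAAG.hom_ext fun s => ?_) (RAAG.hom_ext fun v => ?_)
  · obtain ⟨v, rfl | hv⟩ := s
    · simp
    · simp [toStarAmalgam_gen_of_ne Γ u n hv.ne', inr_gen_eq_inl_gen Γ u n hv]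
  · obtain rfl | hv := eq_or_ne v u
    · simp only [MonoidHom.comp_apply, ofStarAmalgam_inr, powGen_gen_self, map_pow,
        toStarAmalgam_gen_self, MonoidHom.id_apply]
      rw [← map_pow, ← powGen_gen_self, inl_apply_eq_inr_apply, inclusion_gen]
    · simp [powGen_gen_of_ne hv, toStarAmalgam_gen_of_ne Γ u n hv]

noncomputable def starAmalgamEquiv : RAAG Γ ≃* P :=
  MonoidHom.toMulEquiv _ _ (ofStarAmalgam_comp_toStarAmalgam Γ u n)
    (toStarAmalgam_comp_ofStarAmalgam Γ u n)

end Star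

theorem raag_splits_over_star_general {V : Type} (Γ : SimpleGraph V) (u : V)
    (hstar : starOfVertex Γ u ≠ Set.univ) :
    ∃ (φ₁ : RAAG (Γ.induce (starOfVertex Γ u)) →* RAAG (Γ.induce (starOfVertex Γ u)))
      (φ₂ : RAAG (Γ.induce (starOfVertex Γ u)) →* RAAG Γ),
      φ₁ (RAAG.gen (Γ.induce (starOfVertex Γ u)) ⟨u, Or.inl rfl⟩) =
        (RAAG.gen (Γ.induce (starOfVertex Γ u)) ⟨u, Or.inl rfl⟩) ^ 2 ∧
      (∀ (v : V) (hv : Γ.Adj u v),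
        φ₁ (RAAG.gen (Γ.induce (starOfVertex Γ u)) ⟨v, Or.inr hv⟩) =
          RAAG.gen (Γ.induce (starOfVertex Γ u)) ⟨v, Or.inr hv⟩) ∧
      (∀ w : starOfVertex Γ u,
        φ₂ (RAAG.gen (Γ.induce (starOfVertex Γ u)) w) = RAAG.gen Γ ↑w) ∧
      Function.Injective φ₁ ∧ Function.Injective φ₂ ∧
      ¬ Function.Surjective φ₁ ∧ ¬ Function.Surjective φ₂ ∧
      Nonempty (RAAG (Γ.induce (starOfVertex Γ u)) ≃*
        vertexSubgroup Γ (starOfVertex Γ u)) ∧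
      Nonempty (RAAG Γ ≃* AmalgamatedProduct φ₁ φ₂) := by
  classical
  refine ⟨RAAG.powGen (starCenter Γ u) 2, RAAG.inclusion _, RAAG.powGen_gen_self _ _,
    fun v hv => RAAG.powGen_gen_of_ne fun h => hv.ne (congrArg Subtype.val h).symm,
    RAAG.inclusion_gen _, RAAG.powGen_injective (fun _ => starCenter_adj Γ u) two_ne_zero,
    RAAG.inclusion_injective _, RAAG.powGen_not_surjective (by norm_num),
    RAAG.inclusion_not_surjective _ hstar, ⟨RAAG.equivVertexSubgroup _⟩,
    ⟨starAmalgamEquiv Γ u 2⟩⟩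

/-- Let `u` be a vertex of a finite simple graph `Γ` with
`star(u) ≠ Γ`. Then `A(Γ)` splits non-trivially over a subgroup isomorphic to
`⟨star(u)⟩`: concretely, `A(Γ)` is the amalgamated product of `A(star(u))` and `A(Γ)`
along the embedding `φ₁` of `A(star(u))` into itself sending `u` to `u²` and fixing each
vertex of `link(u)`, and the canonical embedding `φ₂ : A(star(u)) → A(Γ)`; moreover this
splitting is non-trivial. -/
theorem raag_splits_over_star {V : Type} [Fintype V] (Γ : SimpleGraph V) (u : V)
    (hstar : starOfVertex Γ u ≠ Set.univ) :
    ∃ (φ₁ : RAAG (Γ.induce (starOfVertex Γ u)) →* RAAG (Γ.induce (starOfVertex Γ u)))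
      (φ₂ : RAAG (Γ.induce (starOfVertex Γ u)) →* RAAG Γ),
      φ₁ (RAAG.gen (Γ.induce (starOfVertex Γ u)) ⟨u, Or.inl rfl⟩) =
        (RAAG.gen (Γ.induce (starOfVertex Γ u)) ⟨u, Or.inl rfl⟩) ^ 2 ∧
      (∀ (v : V) (hv : Γ.Adj u v),
        φ₁ (RAAG.gen (Γ.induce (starOfVertex Γ u)) ⟨v, Or.inr hv⟩) =
          RAAG.gen (Γ.induce (starOfVertex Γ u)) ⟨v, Or.inr hv⟩) ∧
      (∀ w : starOfVertex Γ u,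
        φ₂ (RAAG.gen (Γ.induce (starOfVertex Γ u)) w) = RAAG.gen Γ ↑w) ∧
      Function.Injective φ₁ ∧ Function.Injective φ₂ ∧
      ¬ Function.Surjective φ₁ ∧ ¬ Function.Surjective φ₂ ∧
      Nonempty (RAAG (Γ.induce (starOfVertex Γ u)) ≃*
        vertexSubgroup Γ (starOfVertex Γ u)) ∧
      Nonempty (RAAG Γ ≃* AmalgamatedProduct φ₁ φ₂) :=
  raag_splits_over_star_general Γ u hstar
end CoarseGraph
end

section
/- Let G be a finitely generated group equipped with a word metric from a finite generating set, g ∈ G an element, and H, K ≤ G two subgroups. If the coset gH is contained in some bounded metric neighbourhood of K, then gHg⁻¹ is virtually contained in K, i.e. some finite-index subgroup of gHg⁻¹ is contained in K. -/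
/-! ## Coarse geometry of graphs -/

section CoarseGraph

variable {W : Type*}

/-! Every element `g h g⁻¹` of `gHg⁻¹` lies in one of the finitely many left cosets
`(g w⁻¹) K` with `w` in the `D`-ball of the word metric: writing `g h⁻¹ = k w` gives
`g h g⁻¹ = g w⁻¹ k⁻¹`. A subgroup covered by finitely many cosets of `K` meets `K` in a
finite-index subgroup. -/

open scoped Pointwise

section WordBall

variable {G : Type*} [Group G]

def wordBall (S : Set G) (D : ℕ) : Set G :=
  {x | ∃ l : List G, (∀ s ∈ l, s ∈ S ∨ s⁻¹ ∈ S) ∧ l.length ≤ D ∧ x = l.prod}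

theorem wordBall_finite {S : Set G} (hS : S.Finite) (D : ℕ) : (wordBall S D).Finite := by
  let T : Set G := S ∪ S⁻¹
  have : Finite T := hS.union hS.inv
  refine ((List.finite_length_le T D).image fun l => (l.map Subtype.val).prod).subset ?_
  rintro x ⟨l, hl, hlen, rfl⟩
  refine ⟨l.attach.map fun s => ⟨s.1, hl s.1 s.2⟩, by simpa using hlen, ?_⟩
  simp [List.map_map, Function.comp_def]

theorem wordNbhd_subset_mul_wordBall (S A : Set G) (D : ℕ) :
    wordNbhd S A D ⊆ A * wordBall S D := by
  intro x hx
  have hlt : setWordDist S A x < (D + 1 : ℕ) := hx.trans_lt (by exact_mod_cast D.lt_succ_self)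
  simp only [setWordDist, iInf_lt_iff, wordDist, sInf_lt_iff] at hlt
  obtain ⟨a, ha, _, ⟨l, hl, rfl, rfl⟩, hlen⟩ := hlt
  exact ⟨a, ha, l.prod, ⟨l, hl, Nat.lt_succ_iff.mp (by exact_mod_cast hlen), rfl⟩, rfl⟩

end WordBall

theorem Subgroup.finiteIndex_subgroupOf_of_subset_mul {G : Type*} [Group G] {H K : Subgroup G}
    {F : Set G} (hF : F.Finite) (hHF : (H : Set G) ⊆ F * K) : (K.subgroupOf H).FiniteIndex := by
  let f : H ⧸ K.subgroupOf H → G ⧸ K :=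
    Quotient.map' Subtype.val fun a b hab => by
      simpa [QuotientGroup.leftRel_apply, Subgroup.mem_subgroupOf] using hab
  have hf : Function.Injective f := by
    rintro ⟨a⟩ ⟨b⟩ hab
    exact QuotientGroup.eq.mpr <|
      Subgroup.mem_subgroupOf.mpr (by simpa using QuotientGroup.eq.mp hab)
  have hrange : Set.range f ⊆ QuotientGroup.mk '' F := by
    rintro _ ⟨⟨h⟩, rfl⟩
    obtain ⟨x, hx, k, hk, hxk⟩ := hHF h.2
    exact ⟨x, hx, QuotientGroup.eq.mpr (by simpa [← hxk] using hk)⟩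
  have : Finite (Set.range f) := (hF.image _).subset hrange
  have := Finite.of_injective_finite_range hf
  exact finiteIndex_of_finite_quotient

/-- Let `G` be a finitely generated group with a word metric coming
from a finite generating set `S`, let `g ∈ G` and let `H, K ≤ G` be subgroups. If the
coset `gH` is contained in some bounded neighbourhood of `K`, then `gHg⁻¹` is virtually
contained in `K`: some finite-index subgroup of `gHg⁻¹` is contained in `K`. -/
theorem conjugate_virtually_contained_of_coset_in_nbhd {G : Type*} [Group G]
    (S : Set G) (hS : IsFinGenSet S) (g : G) (H K : Subgroup G)
    (D : ℕ) (hD : ∀ h ∈ H, g * h ∈ wordNbhd S (K : Set G) D) :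
    ∃ H' : Subgroup G, H' ≤ H.map (MulAut.conj g).toMonoidHom ∧
      (H'.subgroupOf (H.map (MulAut.conj g).toMonoidHom)).FiniteIndex ∧
      H' ≤ K := by
  refine ⟨_ ⊓ K, inf_le_left, ?_, inf_le_right⟩
  rw [Subgroup.inf_subgroupOf_left]
  refine Subgroup.finiteIndex_subgroupOf_of_subset_mul
    ((wordBall_finite hS.1 D).image fun w => g * w⁻¹) ?_
  rintro _ ⟨h, hh, rfl⟩
  obtain ⟨k, hk, w, hw, hkw⟩ := wordNbhd_subset_mul_wordBall S K D (hD h⁻¹ (H.inv_mem hh))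
  refine ⟨g * w⁻¹, ⟨w, hw, rfl⟩, k⁻¹, K.inv_mem hk, ?_⟩
  rw [eq_mul_inv_iff_mul_eq.mpr hkw.symm]
  simp [mul_assoc]
end CoarseGraph
end
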